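/- In a ranked plausibility structure where Pl(⟦φ⟧) > ⊥ for all consistent φ, the derived operator K ∘ φ = {ψ : φ ↝ ψ} satisfies postulate R8: if ¬ψ ∉ K ∘ φ, then Cl(K∘φ ∪ {ψ}) ⊆ K ∘ (φ ∧ ψ). -/

import Mathlib

/-- Propositional formulas over atoms of type `α`. -/
inductive Form (α : Type) : Type
  | atom : α → Form α
  | fls : Form α
  | neg : Form α → Form α
  | conj : Form α → Form α → Form α
  | disj : Form α → Form α → Form α
  | impl : Form α → Form α → Form α

/-- Truth-value of a formula under a valuation. -/
def Form.eval {α : Type} (v : α → Bool) : Form α → Bool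
  | .atom a => v a
  | .fls => false
  | .neg φ => !(Form.eval v φ)
  | .conj φ ψ => Form.eval v φ && Form.eval v ψ
  | .disj φ ψ => Form.eval v φ || Form.eval v ψ
  | .impl φ ψ => !(Form.eval v φ) || Form.eval v ψ

/-- The set of worlds (under world-valuation `π`) satisfying `φ`. -/
def truthSet {W α : Type} (π : W → α → Bool) (φ : Form α) : Set W :=
  {w | Form.eval (π w) φ = true}

/-- Propositional validity. -/
def Taut {α : Type} (φ : Form α) : Prop := ∀ v : α → Bool, Form.eval v φ = true

/-- Propositional consequence. -/
def entails {α : Type} (Γ : Set (Form α)) (φ : Form α) : Prop :=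
  ∀ v : α → Bool, (∀ γ ∈ Γ, Form.eval v γ = true) → Form.eval v φ = true

/-- Deductive closure. -/
def Cl {α : Type} (Γ : Set (Form α)) : Set (Form α) := {φ | entails Γ φ}

/-- The conditional `φ ↝ ψ`: `Pl ⟦φ⟧ = ⊥` or `Pl ⟦φ ∧ ψ⟧ > Pl ⟦φ ∧ ¬ψ⟧`. -/
def Cond {W α D : Type} [PartialOrder D] [OrderBot D]
    (Pl : Set W → D) (π : W → α → Bool) (φ ψ : Form α) : Prop :=
  Pl (truthSet π φ) = ⊥ ∨
    Pl (truthSet π (φ.conj ψ.neg)) < Pl (truthSet π (φ.conj ψ))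

/-- Satisfaction of `φ ↝ ψ` in a preferential structure (Lewis/Boutilier style). -/
def PrefSat {W α : Type} (prec : W → W → Prop) (π : W → α → Bool)
    (φ ψ : Form α) : Prop :=
  ∀ w₁ ∈ truthSet π φ, ∃ w₂, (prec w₂ w₁ ∨ w₂ = w₁) ∧
    w₂ ∈ truthSet π (φ.conj ψ) ∧
    ∀ w₃, prec w₃ w₂ → w₃ ∈ truthSet π (φ.impl ψ)

/-- Katsuno–Mendelzon minimization: worlds in `B` closest to some world of `A`. -/
def minU {W D : Type} [PartialOrder D] (d : W → W → D) (A B : Set W) : Set W :=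
  {w | w ∈ B ∧ ∃ w₀ ∈ A, ∀ w' ∈ B, ¬ d w₀ w' < d w₀ w}

/-
Write `P = ⟦φ⟧` and `Q = ⟦ψ⟧`. Since `¬ψ ∉ K ∘ φ`, `P` is not implausible and `Pl (P ∩ Q) = Pl P`.
A formula `γ` lies in `K ∘ (φ ∧ ψ)` exactly when `P ∩ Q ∩ ⟦¬γ⟧` is strictly less plausible than
`P ∩ Q`, and these "small" sets are closed under subsets and finite unions because `Pl` is a
maximum. Every member of `K ∘ φ ∪ {ψ}` gives a small set, and by compactness of propositional
logic a consequence `χ` of `K ∘ φ ∪ {ψ}` follows from finitely many of them, so `P ∩ Q ∩ ⟦¬χ⟧`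
lies in a finite union of small sets.
-/

section TruthSet

variable {W α : Type}

@[simp]
lemma truthSet_fls (π : W → α → Bool) : truthSet π .fls = ∅ := by
  ext; simp [truthSet, Form.eval]

@[simp]
lemma truthSet_neg (π : W → α → Bool) (φ : Form α) :
    truthSet π φ.neg = (truthSet π φ)ᶜ := by
  ext; simp [truthSet, Form.eval]

@[simp]
lemma truthSet_conj (π : W → α → Bool) (φ ψ : Form α) :
    truthSet π (φ.conj ψ) = truthSet π φ ∩ truthSet π ψ := by
  ext; simp [truthSet, Form.eval]

@[simp]
lemma truthSet_disj (π : W → α → Bool) (φ ψ : Form α) :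
    truthSet π (φ.disj ψ) = truthSet π φ ∪ truthSet π ψ := by
  ext; simp [truthSet, Form.eval]

@[simp]
lemma truthSet_impl (π : W → α → Bool) (φ ψ : Form α) :
    truthSet π (φ.impl ψ) = (truthSet π φ)ᶜ ∪ truthSet π ψ := by
  ext; simp [truthSet, Form.eval]

lemma isClopen_truthSet [TopologicalSpace W] {π : W → α → Bool} (hπ : Continuous π)
    (φ : Form α) : IsClopen (truthSet π φ) := by
  induction φ with
  | atom a => exact (isClopen_discrete {true}).preimage ((continuous_apply a).comp hπ)
  | fls => simpa using isClopen_empty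
  | neg φ ih => simpa using ih.compl
  | conj φ ψ ih₁ ih₂ => simpa using ih₁.inter ih₂
  | disj φ ψ ih₁ ih₂ => simpa using ih₁.union ih₂
  | impl φ ψ ih₁ ih₂ => simpa using ih₁.compl.union ih₂

lemma compl_truthSet_subset_biUnion_of_entails (π : W → α → Bool) {Γ : Set (Form α)}
    {χ : Form α} (h : entails Γ χ) : (truthSet π χ)ᶜ ⊆ ⋃ γ ∈ Γ, (truthSet π γ)ᶜ := by
  intro w hw
  by_contra hcov
  simp only [Set.mem_iUnion, Set.mem_compl_iff, not_exists, not_not] at hcov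
  exact hw (h (π w) hcov)

end TruthSet

/-- Compactness of propositional logic, from the compactness of the space of valuations. -/
lemma entails.exists_finite {α : Type} {Γ : Set (Form α)} {χ : Form α} (h : entails Γ χ) :
    ∃ t ⊆ Γ, t.Finite ∧ entails t χ := by
  have hclopen := isClopen_truthSet (π := (id : (α → Bool) → α → Bool)) continuous_id
  obtain ⟨t, htΓ, htfin, hcover⟩ := (hclopen χ).compl.isClosed.isCompact.elim_finite_subcover_image
    (fun γ _ => (hclopen γ).compl.isOpen) (compl_truthSet_subset_biUnion_of_entails id h)
  refine ⟨t, htΓ, htfin, fun v hv => ?_⟩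
  by_contra hχ
  obtain ⟨γ, hγ, hvγ⟩ := Set.mem_iUnion₂.mp (hcover hχ)
  exact hvγ (hv γ hγ)

namespace Plausibility

variable {W D : Type*} [PartialOrder D] {Pl : Set W → D}

lemma union_lt (hmax : ∀ A B : Set W, Pl (A ∪ B) = Pl A ∨ Pl (A ∪ B) = Pl B) {A B : Set W}
    {c : D} (hA : Pl A < c) (hB : Pl B < c) : Pl (A ∪ B) < c := by
  rcases hmax A B with h | h <;> rwa [h]

lemma biUnion_lt (hmax : ∀ A B : Set W, Pl (A ∪ B) = Pl A ∨ Pl (A ∪ B) = Pl B) {ι : Type*}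
    {s : Set ι} (hs : s.Finite) {A : ι → Set W} {c : D} (hempty : Pl ∅ < c)
    (h : ∀ i ∈ s, Pl (A i) < c) : Pl (⋃ i ∈ s, A i) < c := by
  induction s, hs using Set.Finite.induction_on with
  | empty => simpa using hempty
  | @insert i s _ _ ih =>
    rw [Set.biUnion_insert]
    exact union_lt hmax (h i (Set.mem_insert i s)) (ih fun j hj => h j (Set.mem_insert_of_mem i hj))

lemma lt_union_iff (hmax : ∀ A B : Set W, Pl (A ∪ B) = Pl A ∨ Pl (A ∪ B) = Pl B)
    (hmono : Monotone Pl) {A B : Set W} : Pl B < Pl (A ∪ B) ↔ Pl B < Pl A := by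
  refine ⟨fun hlt => ?_, fun hlt => hlt.trans_le (hmono Set.subset_union_left)⟩
  rcases hmax A B with h | h
  · rwa [← h]
  · exact absurd h hlt.ne'

end Plausibility

lemma cond_iff {W α D : Type} [PartialOrder D] [OrderBot D] {Pl : Set W → D}
    (hmax : ∀ A B : Set W, Pl (A ∪ B) = Pl A ∨ Pl (A ∪ B) = Pl B) (hmono : Monotone Pl)
    (π : W → α → Bool) (φ ψ : Form α) :
    Cond Pl π φ ψ ↔
      Pl (truthSet π φ) = ⊥ ∨ Pl (truthSet π φ ∩ (truthSet π ψ)ᶜ) < Pl (truthSet π φ) := by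
  rw [Cond, truthSet_conj, truthSet_conj, truthSet_neg, ← Plausibility.lt_union_iff hmax hmono,
    Set.inter_union_compl]

theorem stmt12_general {W α D : Type} [PartialOrder D] [OrderBot D]
    (Pl : Set W → D) (π : W → α → Bool)
    (hempty : Pl (∅ : Set W) = ⊥)
    (A1 : ∀ A B : Set W, A ⊆ B → Pl A ≤ Pl B)
    (hmax : ∀ A B : Set W, Pl (A ∪ B) = Pl A ∨ Pl (A ∪ B) = Pl B)
    (rev : Form α → Set (Form α)) (hrev : ∀ φ, rev φ = {ψ | Cond Pl π φ ψ})
    (φ ψ : Form α) (h : Form.neg ψ ∉ rev φ) :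
    Cl (rev φ ∪ {ψ}) ⊆ rev (φ.conj ψ) := by
  have hmono : Monotone Pl := fun A B => A1 A B
  set P := truthSet π φ
  set Q := truthSet π ψ
  rw [hrev, Set.mem_ofPred_eq, cond_iff hmax hmono, truthSet_neg, compl_compl, not_or] at h
  obtain ⟨hP, hPQ⟩ := h
  replace hP : ⊥ < Pl P := bot_lt_iff_ne_bot.mpr hP
  have hPQ : Pl (P ∩ Q) = Pl P := (hmono Set.inter_subset_left).eq_of_not_lt hPQ
  have hsmall : ∀ γ ∈ rev φ ∪ {ψ}, Pl (P ∩ Q ∩ (truthSet π γ)ᶜ) < Pl P := by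
    rintro γ (hγ | rfl)
    · rw [hrev, Set.mem_ofPred_eq, cond_iff hmax hmono] at hγ
      exact (hmono (Set.inter_subset_inter_left _ Set.inter_subset_left)).trans_lt
        (hγ.resolve_left hP.ne')
    · rwa [Set.inter_assoc, Set.inter_compl_self, Set.inter_empty, hempty]
  intro χ hχ
  obtain ⟨t, htΓ, htfin, htχ⟩ := entails.exists_finite hχ
  rw [hrev, Set.mem_ofPred_eq, cond_iff hmax hmono, truthSet_conj, hPQ]
  right
  calc Pl (P ∩ Q ∩ (truthSet π χ)ᶜ)
      ≤ Pl (⋃ γ ∈ t, P ∩ Q ∩ (truthSet π γ)ᶜ) := by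
        rw [← Set.inter_iUnion₂]
        exact hmono <| Set.inter_subset_inter_right _ <|
          compl_truthSet_subset_biUnion_of_entails π htχ
    _ < Pl P := Plausibility.biUnion_lt hmax htfin (hempty ▸ hP)
        fun γ hγ => hsmall γ (htΓ hγ)

theorem stmt12 {W α D : Type} [PartialOrder D] [OrderBot D]
    (Pl : Set W → D) (π : W → α → Bool)
    (hempty : Pl (∅ : Set W) = ⊥)
    (A1 : ∀ A B : Set W, A ⊆ B → Pl A ≤ Pl B)
    (htot : ∀ A B : Set W, Pl A ≤ Pl B ∨ Pl B ≤ Pl A)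
    (hmax : ∀ A B : Set W, Pl (A ∪ B) = Pl A ∨ Pl (A ∪ B) = Pl B)
    (hpos : ∀ φ : Form α, (∃ v, Form.eval v φ = true) → ⊥ < Pl (truthSet π φ))
    (rev : Form α → Set (Form α)) (hrev : ∀ φ, rev φ = {ψ | Cond Pl π φ ψ})
    (φ ψ : Form α) (h : Form.neg ψ ∉ rev φ) :
    Cl (rev φ ∪ {ψ}) ⊆ rev (φ.conj ψ) :=
  stmt12_general Pl π hempty A1 hmax rev hrev φ ψ h
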